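/- If the Riemann zeta-function were strongly universal in D(1/2,1), then for every 1/2 < σ₁ < σ₂ < 1 there would be a constant C > 0 with N(T;σ₁,σ₂;ζ) ≥ CT for large T; since the zero-density estimate N(T;σ₁,σ₂;ζ) = o(T) holds, ζ cannot be strongly universal in D(1/2,1). -/

import Mathlib

/-!
If `ζ(s + iτ)` approximates `s ↦ s - x` to within `r / 2` on the disc `|s - x| ≤ r`, then
`ζ(s + iτ)` has a zero in that disc, by the minimum modulus principle. Strong universality gives a set of such
shifts `τ` of positive lower density. Each zero of `ζ` with real part in `[x - r, x + r]` accounts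
only for shifts in an interval of length `2r`, so `N(T; x - r, x + r; ζ) ≫ T`, which contradicts
the zero-density estimate `N = o(T)`.
-/

open Complex Filter MeasureTheory Set

/-- The lower density of a set of real numbers. -/
noncomputable def lowerDensity (S : Set ℝ) : ℝ :=
  Filter.liminf (fun T : ℝ => (MeasureTheory.volume (S ∩ Set.Icc 0 T)).toReal / T)
    Filter.atTop

/-- The number of zeros `ρ` of `φ` with `σ₁ ≤ Re ρ ≤ σ₂` and `0 ≤ Im ρ ≤ T`. -/
noncomputable def zeroCount (φ : ℂ → ℂ) (σ₁ σ₂ T : ℝ) : ℕ :=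
  Set.ncard {ρ : ℂ | φ ρ = 0 ∧ σ₁ ≤ ρ.re ∧ ρ.re ≤ σ₂ ∧ 0 ≤ ρ.im ∧ ρ.im ≤ T}

/-- Strong universality of `ζ` in `D(1/2,1)` in the sense of Voronin. -/
def ZetaStronglyUniversal : Prop :=
  ∀ K : Set ℂ, IsCompact K → K ⊆ {s : ℂ | 1/2 < s.re ∧ s.re < 1} →
    IsConnected Kᶜ → ∀ f : ℂ → ℂ, ContinuousOn f K →
    DifferentiableOn ℂ f (interior K) → ∀ ε : ℝ, 0 < ε →
    0 < lowerDensity {τ : ℝ | ∀ s ∈ K, ‖riemannZeta (s + τ * Complex.I) - f s‖ < ε}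

open Metric

lemma isConnected_compl_closedBall_of_one_lt_rank {E : Type*} [NormedAddCommGroup E]
    [NormedSpace ℝ E] (h : 1 < Module.rank ℝ E) (x : E) (r : ℝ) :
    IsConnected (closedBall x r)ᶜ := by
  rcases lt_or_ge r 0 with hr | hr
  · rw [closedBall_eq_empty.2 hr, compl_empty]
    exact isConnected_univ
  have himage : (fun p : ℝ × E => x + p.1 • p.2) '' (Ioi r ×ˢ sphere 0 1) = (closedBall x r)ᶜ := by
    ext z
    simp only [mem_image, mem_prod, mem_Ioi, mem_sphere_zero_iff_norm, mem_compl_iff,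
      mem_closedBall, not_le, Prod.exists, dist_eq_norm]
    constructor
    · rintro ⟨t, u, ⟨ht, hu⟩, rfl⟩
      rwa [add_sub_cancel_left, norm_smul, hu, mul_one, Real.norm_of_nonneg (hr.trans ht.le)]
    · intro hz
      have hne : ‖z - x‖ ≠ 0 := (hr.trans_lt hz).ne'
      refine ⟨‖z - x‖, ‖z - x‖⁻¹ • (z - x), ⟨hz, ?_⟩, ?_⟩
      · rw [norm_smul, norm_inv, norm_norm, inv_mul_cancel₀ hne]
      · rw [smul_smul, mul_inv_cancel₀ hne, one_smul, add_sub_cancel]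
  rw [← himage]
  exact (isConnected_Ioi.prod (isConnected_sphere h 0 zero_le_one)).image _ (by fun_prop)

theorem exists_zero_of_norm_lt_norm_on_sphere {E : Type*} [NormedAddCommGroup E]
    [NormedSpace ℂ E] [FiniteDimensional ℂ E] [Nontrivial E] {F : E → ℂ} {c : E} {r : ℝ}
    (hr : 0 < r) (hF : DiffContOnCl ℂ F (ball c r)) (h : ∀ z ∈ sphere c r, ‖F c‖ < ‖F z‖) :
    ∃ z ∈ ball c r, F z = 0 := by
  by_contra! hne
  have hne' : ∀ z ∈ closure (ball c r), F z ≠ 0 := by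
    rw [closure_ball c hr.ne']
    intro z hz
    rcases (mem_closedBall.1 hz).lt_or_eq with hz | hz
    · exact hne z hz
    · exact norm_pos_iff.1 ((norm_nonneg _).trans_lt (h z hz))
  -- minimum modulus principle: the maximum principle for `1 / F`
  obtain ⟨z, hz, hmax⟩ := Complex.exists_mem_frontier_isMaxOn_norm isBounded_ball
    ⟨c, mem_ball_self hr⟩ (hF.inv hne')
  have hcz : ‖(F c)⁻¹‖ ≤ ‖(F z)⁻¹‖ := hmax (subset_closure (mem_ball_self hr))
  rw [norm_inv, norm_inv, inv_le_inv₀ (norm_pos_iff.2 (hne' c (subset_closure (mem_ball_self hr))))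
    (norm_pos_iff.2 (hne' z (frontier_subset_closure hz)))] at hcz
  rw [frontier_ball c hr.ne'] at hz
  exact (h z hz).not_ge hcz

theorem exists_zero_of_norm_sub_lt {F : ℂ → ℂ} {c : ℂ} {r : ℝ} (hr : 0 < r)
    (hF : DiffContOnCl ℂ F (ball c r)) (h : ∀ z ∈ closedBall c r, ‖F z - (z - c)‖ < r / 2) :
    ∃ z ∈ ball c r, F z = 0 := by
  refine exists_zero_of_norm_lt_norm_on_sphere hr hF fun z hz => ?_
  have hc := h c (mem_closedBall_self hr.le)
  rw [sub_self, sub_zero] at hc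
  have hz' := h z (sphere_subset_closedBall hz)
  have hzc : ‖z - c‖ = r := mem_sphere_iff_norm.1 hz
  have := norm_sub_norm_le (z - c) (F z)
  rw [norm_sub_rev (z - c)] at this
  linarith

lemma Complex.abs_re_sub_re_le_dist (z w : ℂ) : |z.re - w.re| ≤ dist z w := by
  rw [dist_eq, ← sub_re]
  exact abs_re_le_norm _

lemma Complex.abs_im_sub_im_le_dist (z w : ℂ) : |z.im - w.im| ≤ dist z w := by
  rw [dist_eq, ← sub_im]
  exact abs_im_le_norm _

lemma diffContOnCl_riemannZeta_add_mul_I {c : ℂ} {r : ℝ}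
    (hK : ∀ s ∈ closedBall c r, s.re < 1) (τ : ℝ) :
    DiffContOnCl ℂ (fun s => riemannZeta (s + τ * I)) (ball c r) := by
  refine DifferentiableOn.diffContOnCl fun s hs => ?_
  have hs1 : s + τ * I ≠ 1 := by
    intro h
    have hre := congrArg re h
    simp only [add_re, mul_re, ofReal_re, I_re, ofReal_im, I_im, one_re] at hre
    linarith [hK s (closure_ball_subset_closedBall hs)]
  exact ((differentiableAt_riemannZeta hs1).comp s
    (differentiableAt_id.add_const _)).differentiableWithinAt

lemma finite_riemannZeta_zeros_in_rectangle (σ₁ σ₂ T : ℝ) :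
    {ρ : ℂ | riemannZeta ρ = 0 ∧ σ₁ ≤ ρ.re ∧ ρ.re ≤ σ₂ ∧ 0 ≤ ρ.im ∧ ρ.im ≤ T}.Finite :=
  ((isCompact_Icc.reProdIm isCompact_Icc).inter_riemannZetaZeros_finite).subset
    fun _ ⟨h0, h1, h2, h3, h4⟩ => ⟨⟨⟨h1, h2⟩, h3, h4⟩, h0⟩

lemma measureReal_le_of_forall_exists_dist_lt {ι : Type*} {A : Set ℝ} {Z : Set ι}
    (hZ : Z.Finite) (f : ι → ℝ) {r : ℝ} (hr : 0 ≤ r) (h : ∀ τ ∈ A, ∃ i ∈ Z, dist τ (f i) < r) :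
    volume.real A ≤ 2 * r * Z.ncard := by
  have hA : A ⊆ ⋃ i ∈ hZ.toFinset, ball (f i) r := fun τ hτ => by
    obtain ⟨i, hi, hd⟩ := h τ hτ
    exact mem_biUnion (hZ.mem_toFinset.2 hi) hd
  calc volume.real A ≤ volume.real (⋃ i ∈ hZ.toFinset, ball (f i) r) :=
        measureReal_mono hA ((measure_biUnion_finset_le _ _).trans_lt
          (ENNReal.sum_lt_top.2 fun _ _ => measure_ball_lt_top)).ne
    _ ≤ ∑ i ∈ hZ.toFinset, volume.real (ball (f i) r) := measureReal_biUnion_finset_le _ _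
    _ = 2 * r * Z.ncard := by
      simp [Real.volume_real_ball hr, Set.ncard_eq_toFinset_card _ hZ, mul_comm]

lemma measureReal_le_zeroCount {x r T : ℝ} (hr : 0 ≤ r) {S : Set ℝ}
    (hS : ∀ τ ∈ S, ∃ z ∈ ball (x : ℂ) r, riemannZeta (z + τ * I) = 0) :
    volume.real (S ∩ Icc 0 (T - r)) ≤ r + 2 * r * zeroCount riemannZeta (x - r) (x + r) T := by
  have hsplit : S ∩ Icc 0 (T - r) ⊆ Icc 0 r ∪ S ∩ Icc r (T - r) := by
    rintro τ ⟨hτS, hτ0, hτT⟩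
    rcases le_total τ r with hτr | hτr
    · exact Or.inl ⟨hτ0, hτr⟩
    · exact Or.inr ⟨hτS, hτr, hτT⟩
  have hcover : ∀ τ ∈ S ∩ Icc r (T - r), ∃ ρ ∈ {ρ : ℂ | riemannZeta ρ = 0 ∧ x - r ≤ ρ.re ∧
      ρ.re ≤ x + r ∧ 0 ≤ ρ.im ∧ ρ.im ≤ T}, dist τ ρ.im < r := by
    rintro τ ⟨hτS, hτr, hτT⟩
    obtain ⟨z, hz, hzero⟩ := hS τ hτS
    have hre := abs_lt.1 ((Complex.abs_re_sub_re_le_dist z x).trans_lt hz)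
    have him := abs_lt.1 ((Complex.abs_im_sub_im_le_dist z x).trans_lt hz)
    simp only [ofReal_re, ofReal_im, sub_zero] at hre him
    have hρre : (z + τ * I).re = z.re := by simp
    have hρim : (z + τ * I).im = z.im + τ := by simp
    refine ⟨z + τ * I, ⟨hzero, ?_, ?_, ?_, ?_⟩, ?_⟩
    all_goals simp only [hρre, hρim, Real.dist_eq, abs_lt]
    all_goals first | linarith | exact ⟨by linarith, by linarith⟩
  calc volume.real (S ∩ Icc 0 (T - r))
      ≤ volume.real (Icc 0 r) + volume.real (S ∩ Icc r (T - r)) :=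
        (measureReal_mono hsplit (((isBounded_Icc 0 r).union
          ((isBounded_Icc r (T - r)).subset inter_subset_right)).measure_lt_top.ne)).trans
          (measureReal_union_le _ _)
    _ ≤ r + 2 * r * zeroCount riemannZeta (x - r) (x + r) T := by
        gcongr
        · rw [Real.volume_real_Icc_of_le hr, sub_zero]
        · exact measureReal_le_of_forall_exists_dist_lt
            (finite_riemannZeta_zeros_in_rectangle _ _ _) im hr hcover

lemma eventually_mul_lt_measureReal_of_lt_lowerDensity {S : Set ℝ} {c : ℝ}
    (hc : c < lowerDensity S) : ∀ᶠ T in atTop, c * T < volume.real (S ∩ Icc 0 T) := by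
  have hbdd : IsBoundedUnder (· ≥ ·) atTop
      (fun T : ℝ => (volume (S ∩ Icc 0 T)).toReal / T) :=
    isBoundedUnder_of_eventually_ge <| (eventually_ge_atTop 0).mono fun T hT =>
      div_nonneg ENNReal.toReal_nonneg hT
  filter_upwards [eventually_lt_of_lt_liminf hc hbdd, eventually_gt_atTop 0] with T hT hT0
  exact (lt_div_iff₀ hT0).1 hT

lemma exists_pos_eventually_mul_le_of_lowerDensity_pos {S : Set ℝ} (hS : 0 < lowerDensity S)
    {N : ℝ → ℝ} {a b h : ℝ} (hb : 0 < b)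
    (hle : ∀ T, volume.real (S ∩ Icc 0 (T - h)) ≤ a + b * N T) :
    ∃ C : ℝ, 0 < C ∧ ∀ᶠ T in atTop, C * T ≤ N T := by
  set c := lowerDensity S
  refine ⟨c / (4 * b), by positivity, ?_⟩
  have hshift := (tendsto_atTop_add_const_right atTop (-h) tendsto_id).eventually
    (eventually_mul_lt_measureReal_of_lt_lowerDensity (half_lt_self hS))
  filter_upwards [hshift, eventually_ge_atTop (2 * h + 4 * a / c)] with T hT hTlarge
  simp only [id, ← sub_eq_add_neg] at hT
  have hcT : 2 * c * h + 4 * a ≤ c * T := by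
    have := mul_le_mul_of_nonneg_left hTlarge hS.le
    rwa [mul_add, mul_div_cancel₀ _ hS.ne', ← mul_assoc, mul_comm c 2] at this
  rw [div_mul_eq_mul_div, div_le_iff₀ (by positivity)]
  linarith [hle T]

lemma not_eventually_mul_le_of_tendsto_div_zero {N : ℝ → ℝ}
    (hN : Tendsto (fun T => N T / T) atTop (nhds 0)) {C : ℝ} (hC : 0 < C) :
    ¬ ∀ᶠ T in atTop, C * T ≤ N T := fun hlower => by
  obtain ⟨T, hle, hlt, hT⟩ :=
    (hlower.and ((hN.eventually_lt_const hC).and (eventually_gt_atTop 0))).exists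
  rw [div_lt_iff₀ hT] at hlt
  linarith

theorem ZetaStronglyUniversal.exists_pos_mul_le_zeroCount (hU : ZetaStronglyUniversal)
    {σ₁ σ₂ : ℝ} (h₁ : 1 / 2 < σ₁) (h₁₂ : σ₁ < σ₂) (h₂ : σ₂ < 1) :
    ∃ C : ℝ, 0 < C ∧ ∀ᶠ T in atTop, C * T ≤ (zeroCount riemannZeta σ₁ σ₂ T : ℝ) := by
  obtain ⟨x, r, rfl, rfl⟩ : ∃ x r : ℝ, σ₁ = x - r ∧ σ₂ = x + r :=
    ⟨(σ₁ + σ₂) / 2, (σ₂ - σ₁) / 2, by ring, by ring⟩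
  have hr : 0 < r := by linarith
  have hK : closedBall (x : ℂ) r ⊆ {s : ℂ | 1 / 2 < s.re ∧ s.re < 1} := fun s hs => by
    have := abs_le.1 ((Complex.abs_re_sub_re_le_dist s x).trans hs)
    simp only [ofReal_re] at this
    exact ⟨by linarith, by linarith⟩
  -- universality applied to the target `s ↦ s - x`, which has a simple zero at the centre
  have hdensity : 0 < lowerDensity {τ : ℝ | ∀ s ∈ closedBall (x : ℂ) r,
      ‖riemannZeta (s + τ * I) - (s - x)‖ < r / 2} :=
    hU _ (isCompact_closedBall _ _) hK (isConnected_compl_closedBall_of_one_lt_rank (by simp) _ _)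
      (fun s => s - x) (by fun_prop) (by fun_prop) (r / 2) (by positivity)
  exact exists_pos_eventually_mul_le_of_lowerDensity_pos hdensity (by positivity : 0 < 2 * r)
    fun T => measureReal_le_zeroCount hr.le fun τ hτ =>
      exists_zero_of_norm_sub_lt hr
        (diffContOnCl_riemannZeta_add_mul_I (fun s hs => (hK hs).2) τ) hτ

/-- Strong universality of `ζ` would force `≥ CT` zeros in substrips of `D(1/2,1)`;
hence, by the zero-density estimate `N(T;σ₁,σ₂;ζ) = o(T)`, the Riemann zeta-function
is not strongly universal in `D(1/2,1)`. -/
theorem zeta_not_strongly_universal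
    (hZD : ∀ σ₁ σ₂ : ℝ, 1/2 < σ₁ → σ₁ < σ₂ → σ₂ < 1 →
      Tendsto (fun T : ℝ => (zeroCount riemannZeta σ₁ σ₂ T : ℝ) / T) atTop (nhds 0)) :
    (ZetaStronglyUniversal → ∀ σ₁ σ₂ : ℝ, 1/2 < σ₁ → σ₁ < σ₂ → σ₂ < 1 →
      ∃ C : ℝ, 0 < C ∧ ∀ᶠ T in atTop, C * T ≤ (zeroCount riemannZeta σ₁ σ₂ T : ℝ)) ∧
    ¬ ZetaStronglyUniversal := by
  refine ⟨fun hU _ _ h₁ h₁₂ h₂ => hU.exists_pos_mul_le_zeroCount h₁ h₁₂ h₂, fun hU => ?_⟩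
  obtain ⟨C, hC, hlower⟩ := hU.exists_pos_mul_le_zeroCount (σ₁ := 3 / 5) (σ₂ := 7 / 10)
    (by norm_num) (by norm_num) (by norm_num)
  exact not_eventually_mul_le_of_tendsto_div_zero
    (hZD _ _ (by norm_num) (by norm_num) (by norm_num)) hC hlower
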